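/- arXiv:1912.04854 — 5 statements merged into one kernel-verified Lean document; each statement's English description precedes it below -/
import Mathlib

section
/- Holley's criterion for the arboreal gas: if μ₁ is Bernoulli percolation with parameter p=β/(1+β) on a finite graph and μ₂ is the arboreal gas with parameter β, then for all edge sets A, B one has μ₁(A∪B)·μ₂(A∩B) ≥ μ₁(A)·μ₂(B). -/
open scoped Classical

lemma isAcyclic_anti {V : Type*} {G G' : SimpleGraph V} (h : G ≤ G')
    (hG' : G'.IsAcyclic) : G.IsAcyclic := fun _v c hc => hG' (c.mapLe h) (hc.mapLe h)

/-- **Holley's criterion for the arboreal gas.** With `μ₁` Bernoulli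
percolation at `p = β/(1+β)` and `μ₂` the arboreal gas at `β` on a finite graph,
for all edge sets `A, B ⊆ E` one has `μ₁(A ∪ B) · μ₂(A ∩ B) ≥ μ₁(A) · μ₂(B)`. -/
theorem holley_criterion_arboreal_gas
    (n : ℕ) (G : SimpleGraph (Fin n)) [DecidableRel G.Adj]
    (β : ℝ) (hβ : 0 < β) (p : ℝ) (hp : p = β / (1 + β))
    (A B : Finset (Sym2 (Fin n))) (hA : A ⊆ G.edgeFinset) (hB : B ⊆ G.edgeFinset) :
    (p ^ A.card * (1 - p) ^ (G.edgeFinset.card - A.card)) *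
        ((if (SimpleGraph.fromEdgeSet (↑B : Set (Sym2 (Fin n)))).IsAcyclic
            then β ^ B.card else 0) /
          (∑ T ∈ G.edgeFinset.powerset,
            if (SimpleGraph.fromEdgeSet (↑T : Set (Sym2 (Fin n)))).IsAcyclic
              then β ^ T.card else 0))
    ≤ (p ^ (A ∪ B).card * (1 - p) ^ (G.edgeFinset.card - (A ∪ B).card)) *
        ((if (SimpleGraph.fromEdgeSet (↑(A ∩ B) : Set (Sym2 (Fin n)))).IsAcyclic
            then β ^ (A ∩ B).card else 0) /
          (∑ T ∈ G.edgeFinset.powerset,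
            if (SimpleGraph.fromEdgeSet (↑T : Set (Sym2 (Fin n)))).IsAcyclic
              then β ^ T.card else 0)) := by
  have hβ1 : (0:ℝ) < 1 + β := by linarith
  have h1p : 1 - p = 1 / (1 + β) := by rw [hp]; field_simp; ring
  have hppos : 0 < p := by rw [hp]; positivity
  have h1ppos : 0 < 1 - p := by rw [h1p]; positivity
  have hpβ : p = β * (1 - p) := by rw [h1p, hp]; ring
  set Z := ∑ T ∈ G.edgeFinset.powerset,
      if (SimpleGraph.fromEdgeSet (↑T : Set (Sym2 (Fin n)))).IsAcyclic
        then β ^ T.card else 0 with hZ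
  have hZpos : 0 < Z := by
    apply Finset.sum_pos'
    · intro T _
      split <;> positivity
    · refine ⟨∅, Finset.empty_mem_powerset _, ?_⟩
      simp
  by_cases hBac : (SimpleGraph.fromEdgeSet (↑B : Set (Sym2 (Fin n)))).IsAcyclic
  · have hABac : (SimpleGraph.fromEdgeSet (↑(A ∩ B) : Set (Sym2 (Fin n)))).IsAcyclic := by
      refine isAcyclic_anti (SimpleGraph.fromEdgeSet_mono ?_) hBac
      exact_mod_cast fun x hx => (Finset.mem_inter.mp hx).2
    rw [if_pos hBac, if_pos hABac]
    apply le_of_eq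
    set m := G.edgeFinset.card
    have hAm : A.card ≤ m := Finset.card_le_card hA
    have hUm : (A ∪ B).card ≤ m := Finset.card_le_card (Finset.union_subset hA hB)
    have key : ∀ k : ℕ, k ≤ m → p ^ k * (1 - p) ^ (m - k) = β ^ k * (1 - p) ^ m := by
      intro k hk
      have hpk : p ^ k = β ^ k * (1 - p) ^ k := by
        conv_lhs => rw [hpβ]
        rw [mul_pow]
      rw [hpk, mul_assoc, ← pow_add, Nat.add_sub_cancel' hk]
    rw [key _ hAm, key _ hUm]
    have hcard : (A ∪ B).card + (A ∩ B).card = A.card + B.card :=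
      Finset.card_union_add_card_inter A B
    have : β ^ (A ∪ B).card * β ^ (A ∩ B).card = β ^ A.card * β ^ B.card := by
      rw [← pow_add, ← pow_add, hcard]
    field_simp
    linear_combination (-1) * this
  · rw [if_neg hBac]
    simp only [zero_div, mul_zero]
    apply mul_nonneg (mul_nonneg (pow_nonneg hppos.le _) (pow_nonneg h1ppos.le _))
    apply div_nonneg _ hZpos.le
    split <;> positivity
end

section
/- If the edge set S of a finite graph contains a cycle (in particular, a cycle on vertices 1,...,k with k≥2, including the case of a doubled edge), then the product over edges ij in S of (u_i·u_j + 1) vanishes in the Grassmann algebra, where u_i·u_j = -ξ_iη_j - ξ_jη_i - z_iz_j and z_i = 1 - ξ_iη_i. -/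
/-
Each factor splits as `uᵢ·uⱼ + 1 = (ξᵢ - ξⱼ)(ηᵢ - ηⱼ) zⱼ` and is even, hence central, so the
product over `S` may be computed in the commutative ring of central elements and contains the
product over the cycle as a factor. Along the cycle the vectors `ξ_{v m} - ξ_{v (m+1)}` sum to zero;
writing the last one as minus the sum of the others, every resulting term repeats some
`ξ_{v m} - ξ_{v (m+1)}`, whose square is zero.
-/

open ExteriorAlgebra

noncomputable section

/-- Coordinate module carrying the `2n` Grassmann generators. -/
abbrev GrM (n : ℕ) : Type := (Fin n × Bool) → ℝ

/-- The real Grassmann algebra with generators `(ξ i, η i)`. -/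
abbrev Gr (n : ℕ) : Type := ExteriorAlgebra ℝ (GrM n)

/-- Generator `ξ i`. -/
def gξ {n : ℕ} (i : Fin n) : Gr n := ι ℝ (Pi.single (i, false) (1 : ℝ))

/-- Generator `η i`. -/
def gη {n : ℕ} (i : Fin n) : Gr n := ι ℝ (Pi.single (i, true) (1 : ℝ))

/-- `z i = 1 - ξ i * η i`. -/
def gz {n : ℕ} (i : Fin n) : Gr n := 1 - gξ i * gη i

/-- `u i · u j = -ξ i η j - ξ j η i - z i z j`. -/
def udot {n : ℕ} (i j : Fin n) : Gr n := -(gξ i * gη j) - gξ j * gη i - gz i * gz j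

/-- Grassmann (left) derivative `∂_{ξ i}`, i.e. left contraction. -/
def dξ {n : ℕ} (i : Fin n) : Module.End ℝ (Gr n) :=
  CliffordAlgebra.contractLeft (Q := (0 : QuadraticForm ℝ (GrM n))) (LinearMap.proj (i, false))

/-- Grassmann (left) derivative `∂_{η i}`. -/
def dη {n : ℕ} (i : Fin n) : Module.End ℝ (Gr n) :=
  CliffordAlgebra.contractLeft (Q := (0 : QuadraticForm ℝ (GrM n))) (LinearMap.proj (i, true))

/-- The pair `∂_{η i} ∂_{ξ i}`. -/
def pairD {n : ℕ} (i : Fin n) : Module.End ℝ (Gr n) := dη i * dξ i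

/-- `∏ i, ∂_{η i} ∂_{ξ i}`. -/
def fullD {n : ℕ} : Module.End ℝ (Gr n) := (List.ofFn (fun i : Fin n => pairD i)).prod

/-- Plain Berezin integral: apply all derivatives, take the scalar (degree-0) part. -/
def bint {n : ℕ} (G : Gr n) : ℝ := algebraMapInv (fullD G)

/-- Hyperbolic fermionic integral `[G]_0 = ∏ᵢ ∂_{ηᵢ}∂_{ξᵢ} ((∏ᵢ (1+ξᵢηᵢ)) G)`,
using `1/zᵢ = 1 + ξᵢηᵢ`. -/
def sint {n : ℕ} (G : Gr n) : ℝ :=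
  bint ((List.ofFn (fun i : Fin n => (1 : Gr n) + gξ i * gη i)).prod * G)

/-- Exponential of a Grassmann element by its terminating power series:
for elements with vanishing degree-0 part, `x ^ (2n+1) = 0`, so the series below is exact. -/
def expG {n : ℕ} (x : Gr n) : Gr n :=
  ∑ k ∈ Finset.range (2 * n + 1), (k.factorial : ℝ)⁻¹ • x ^ k


namespace ExteriorAlgebra

variable {R M : Type*} [CommRing R] [AddCommGroup M] [Module R M]

theorem ι_mul_ι_anticomm (x y : M) : ι R x * ι R y = -(ι R y * ι R x) :=
  eq_neg_of_add_eq_zero_left (ι_add_mul_swap x y)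

theorem ι_mul_ι_mem_center (x y : M) : ι R x * ι R y ∈ Subring.center (ExteriorAlgebra R M) := by
  rw [Subring.mem_center_iff]
  intro c
  induction c using ExteriorAlgebra.induction with
  | algebraMap r => exact Algebra.commutes r _
  | ι z =>
    rw [← mul_assoc, ι_mul_ι_anticomm z x, neg_mul, mul_assoc, ι_mul_ι_anticomm z y, mul_neg,
      neg_neg, mul_assoc]
  | mul a b ha hb => rw [mul_assoc, hb, ← mul_assoc, ha, mul_assoc]
  | add a b ha hb => rw [add_mul, mul_add, ha, hb]

theorem ι_mul_ι_mul_ι_eq_zero (x y : M) : ι R y * (ι R x * ι R y) = 0 := by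
  rw [Subring.mem_center_iff.1 (ι_mul_ι_mem_center x y), mul_assoc, ι_sq_zero, mul_zero]

theorem ι_mul_ι_mul_ι_mul_ι_eq_zero (x y w : M) : ι R x * (ι R y * (ι R x * ι R w)) = 0 := by
  rw [Subring.mem_center_iff.1 (ι_mul_ι_mem_center x w), ← mul_assoc, ← mul_assoc, ι_sq_zero,
    zero_mul, zero_mul]

theorem prod_center_eq_zero_of_sum_eq_zero {N : Type*} [Fintype N] [Nonempty N]
    (a : N → M) (f : N → Subring.center (ExteriorAlgebra R M))
    (hf : ∀ m, ∃ g, (f m : ExteriorAlgebra R M) = ι R (a m) * g) (ha : ∑ m, a m = 0) :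
    ∏ m, f m = 0 := by
  classical
  have hmul_ι : ∀ m, (f m : ExteriorAlgebra R M) * ι R (a m) = 0 := fun m => by
    obtain ⟨g, hg⟩ := hf m
    rw [← Subring.mem_center_iff.1 (f m).2, hg, ← mul_assoc, ι_sq_zero, zero_mul]
  obtain ⟨m₀⟩ := ‹Nonempty N›
  have ha₀ : a m₀ = -∑ m ∈ Finset.univ.erase m₀, a m :=
    eq_neg_of_add_eq_zero_left <| by rwa [Finset.add_sum_erase _ _ (Finset.mem_univ m₀)]
  obtain ⟨g, hg⟩ := hf m₀
  rw [← Finset.prod_erase_mul _ _ (Finset.mem_univ m₀)]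
  apply Subtype.ext
  rw [Subring.coe_mul, hg, ha₀, map_neg, map_sum, neg_mul, Finset.sum_mul, mul_neg, Finset.mul_sum,
    Subring.coe_zero, neg_eq_zero]
  refine Finset.sum_eq_zero fun m hm => ?_
  rw [← Finset.mul_prod_erase _ _ hm, mul_comm, Subring.coe_mul, mul_assoc, ← mul_assoc _ (ι R _),
    hmul_ι, zero_mul, mul_zero]

end ExteriorAlgebra

section Grassmann

variable {n : ℕ}

theorem gz_mem_center (i : Fin n) : gz i ∈ Subring.center (Gr n) :=
  Subring.sub_mem _ (Subring.one_mem _) (ι_mul_ι_mem_center _ _)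

theorem udot_add_one_mem_center (i j : Fin n) : udot i j + 1 ∈ Subring.center (Gr n) := by
  have hξη : ∀ i j : Fin n, gξ i * gη j ∈ Subring.center (Gr n) := fun _ _ =>
    ι_mul_ι_mem_center _ _
  unfold udot
  exact Subring.add_mem _ (Subring.sub_mem _ (Subring.sub_mem _ (Subring.neg_mem _ (hξη i j))
    (hξη j i)) (Subring.mul_mem _ (gz_mem_center i) (gz_mem_center j))) (Subring.one_mem _)

theorem udot_comm (i j : Fin n) : udot i j = udot j i := by
  unfold udot
  rw [Subring.mem_center_iff.1 (gz_mem_center i) (gz j)]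
  abel

theorem udot_add_one_eq (i j : Fin n) :
    udot i j + 1 = (gξ i - gξ j) * ((gη i - gη j) * gz j) := by
  unfold udot gz
  noncomm_ring
  simp only [gξ, gη, ι_mul_ι_mul_ι_eq_zero, ι_mul_ι_mul_ι_mul_ι_eq_zero, mul_zero, smul_zero,
    add_zero]

def edgeFactor (p : Fin n × Fin n) : Subring.center (Gr n) :=
  ⟨udot p.1 p.2 + 1, udot_add_one_mem_center p.1 p.2⟩

theorem edgeFactor_swap (p : Fin n × Fin n) : edgeFactor p.swap = edgeFactor p :=
  Subtype.ext <| congrArg (· + 1) (udot_comm p.2 p.1)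

theorem prod_edgeFactor_cycle_eq_zero {N : ℕ} [NeZero N] (v : Fin N → Fin n) :
    ∏ m, edgeFactor (v m, v (m + 1)) = 0 := by
  refine prod_center_eq_zero_of_sum_eq_zero
    (fun m => Pi.single (v m, false) 1 - Pi.single (v (m + 1), false) 1) _
    (fun m => ⟨(gη (v m) - gη (v (m + 1))) * gz (v (m + 1)), ?_⟩) ?_
  · rw [map_sub]
    exact udot_add_one_eq _ _
  · rw [Finset.sum_sub_distrib, sub_eq_zero]
    exact (Equiv.sum_comp (Equiv.addRight (1 : Fin N))
      (fun m => (Pi.single (v m, false) 1 : GrM n))).symm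

end Grassmann

theorem cycle_product_vanishes_general (n k : ℕ) (S : Finset (Fin n × Fin n))
    (v : Fin (k + 2) → Fin n)
    (e : Fin (k + 2) → Fin n × Fin n) (he : Function.Injective e)
    (heS : ∀ m : Fin (k + 2),
      e m ∈ S ∧ (e m = (v m, v (m + 1)) ∨ e m = (v (m + 1), v m))) :
    (S.toList.map (fun p => udot p.1 p.2 + 1)).prod = 0 := by
  classical
  have hcycle : ∏ p ∈ Finset.univ.image e, edgeFactor p = 0 := by
    rw [Finset.prod_image fun x _ y _ h => he h, ← prod_edgeFactor_cycle_eq_zero v]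
    refine Finset.prod_congr rfl fun m _ => ?_
    rcases (heS m).2 with h | h
    · rw [h]
    · rw [h, ← edgeFactor_swap]
      rfl
  have hsub : Finset.univ.image e ⊆ S := by
    simpa only [Finset.image_subset_iff, Finset.mem_univ, true_implies] using fun m => (heS m).1
  calc (S.toList.map fun p => udot p.1 p.2 + 1).prod
      = ((∏ p ∈ S, edgeFactor p : Subring.center (Gr n)) : Gr n) := by
        rw [← Finset.prod_map_toList, Submonoid.coe_list_prod, List.map_map]
        rfl
    _ = 0 := by rw [← Finset.prod_sdiff hsub, hcycle, mul_zero, Subring.coe_zero]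

/-- If the edge set `S` contains a cycle on distinct vertices
`v 0, …, v (k+1)` (length `k+2 ≥ 2`, the case of a doubled edge being the two
orientations of the same pair), then `∏_{ij ∈ S} (uᵢ·uⱼ + 1) = 0` in the Grassmann
algebra. -/
theorem cycle_product_vanishes (n k : ℕ) (S : Finset (Fin n × Fin n))
    (v : Fin (k + 2) → Fin n) (hv : Function.Injective v)
    (e : Fin (k + 2) → Fin n × Fin n) (he : Function.Injective e)
    (heS : ∀ m : Fin (k + 2),
      e m ∈ S ∧ (e m = (v m, v (m + 1)) ∨ e m = (v (m + 1), v m))) :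
    (S.toList.map (fun p => udot p.1 p.2 + 1)).prod = 0 :=
  cycle_product_vanishes_general n k S v e he heS
end
end

section
/- For any forest F on a finite vertex set Λ, the hyperbolic fermionic integral of the product over edges ij ∈ F of (u_i·u_j + 1) equals 1, where the integral of a form G is defined as (∏_i ∂_{η_i}∂_{ξ_i} (1+ξ_iη_i)) G (extracting the top coefficient). -/
open ExteriorAlgebra

noncomputable section

open scoped Classical

/-- `F` is a forest: edges are recorded as ordered pairs with `p.1 < p.2` and the
induced simple graph is acyclic. -/
def ForestRep {n : ℕ} (F : Finset (Fin n × Fin n)) : Prop :=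
  (∀ p ∈ F, p.1 < p.2) ∧ (SimpleGraph.fromRel (fun i j => (i, j) ∈ F)).IsAcyclic

/-- Weight `∏_{ij ∈ F} β i j` of a forest. -/
def fwt {n : ℕ} (β : Fin n → Fin n → ℝ) (F : Finset (Fin n × Fin n)) : ℝ :=
  ∏ p ∈ F, β p.1 p.2

/-- `∏_{T tree of F} (1 + ∑_{i ∈ T} g i)`, product over connected components. -/
noncomputable def treeFactor {n : ℕ} (F : Finset (Fin n × Fin n)) (g : Fin n → ℝ) : ℝ :=
  ∏ c ∈ Finset.univ.image (SimpleGraph.fromRel (fun i j => (i, j) ∈ F)).connectedComponentMk,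
    (1 + ∑ i ∈ Finset.univ.filter
        (fun i => (SimpleGraph.fromRel (fun i j => (i, j) ∈ F)).connectedComponentMk i = c), g i)

/-!
The derivatives `∂_{η_a}∂_{ξ_a}` commute, so a leaf `a` of the forest can be integrated out
first. If `a` hangs on the edge `ia`, then
`(1 + ξ_a η_a)(u_i·u_a + 1) = ξ_a η_a + ξ_i η_i - ξ_i η_a - ξ_a η_i`,
which `∂_{η_a}∂_{ξ_a}` sends to `1`, as it does `1 + ξ_a η_a`. All other factors are even and
free of `a`, so they pass through `∂_{η_a}∂_{ξ_a}`: deleting the edge `ia` does not change the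
integral. Deleting leaves one by one ends at the empty forest, whose integral is
`∏ᵢ ∂_{η_i}∂_{ξ_i}(1 + ξ_i η_i) = 1`.
-/

theorem List.Perm.prod_map_eq_mul {ι M : Type*} [Monoid M] {f : ι → M} {l l' : List ι} {a : ι}
    (h : l.Perm (a :: l')) (hf : ∀ x ∈ l, ∀ y ∈ l, Commute (f x) (f y)) :
    (l.map f).prod = f a * (l'.map f).prod := by
  have hpw : (l.map f).Pairwise Commute := by
    refine List.pairwise_of_forall_mem_list ?_
    simp only [List.mem_map]
    rintro _ ⟨x, hx, rfl⟩ _ ⟨y, hy, rfl⟩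
    exact hf x hx y hy
  rw [(h.map f).prod_eq' hpw, List.map_cons, List.prod_cons]

theorem SimpleGraph.IsAcyclic.exists_adj_forall_adj_eq {V : Type*} [Finite V] {G : SimpleGraph V}
    (hG : G.IsAcyclic) {x y : V} (hxy : G.Adj x y) :
    ∃ u v, G.Adj u v ∧ ∀ w, G.Adj u w → w = v := by
  have : Nonempty V := ⟨x⟩
  obtain ⟨u, v, p, hp, hmax⟩ := SimpleGraph.Walk.exists_isPath_forall_isPath_length_le_length G
  have hnil : ¬p.Nil := by
    intro hnil
    have := hmax x y (SimpleGraph.Path.singleton hxy) (SimpleGraph.Path.singleton hxy).2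
    simp [hnil.length_eq_zero] at this
  refine ⟨u, p.snd, p.adj_snd hnil, fun w hw => hG.eq_snd_of_adj_start hp hw ?_⟩
  by_contra hwp
  have := hmax w v (p.cons hw.symm) (hp.cons hwp)
  simp at this

namespace ForestRep

variable {n : ℕ} {F : Finset (Fin n × Fin n)}

theorem mono {F' : Finset (Fin n × Fin n)} (hF : ForestRep F) (h : F' ⊆ F) : ForestRep F' := by
  refine ⟨fun p hp => hF.1 p (h hp), hF.2.anti fun x y hxy => ?_⟩
  rw [SimpleGraph.fromRel_adj] at hxy ⊢
  exact ⟨hxy.1, hxy.2.imp (@h _) (@h _)⟩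

theorem exists_leaf (hF : ForestRep F) (hne : F.Nonempty) :
    ∃ a i e, e ∈ F ∧ i ≠ a ∧ (e = (a, i) ∨ e = (i, a)) ∧ ∀ p ∈ F.erase e, p.1 ≠ a ∧ p.2 ≠ a := by
  obtain ⟨e₀, he₀⟩ := hne
  have hadj : ∀ {x y}, (SimpleGraph.fromRel fun i j => (i, j) ∈ F).Adj x y ↔
      x ≠ y ∧ ((x, y) ∈ F ∨ (y, x) ∈ F) := SimpleGraph.fromRel_adj _ _ _
  have hasymm : ∀ {x y}, (x, y) ∈ F → (y, x) ∉ F := fun h h' => (hF.1 _ h).not_gt (hF.1 _ h')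
  obtain ⟨a, i, hai, hleaf⟩ :=
    hF.2.exists_adj_forall_adj_eq (hadj.2 ⟨(hF.1 e₀ he₀).ne, Or.inl he₀⟩)
  have hat : ∀ p ∈ F, p.1 = a ∨ p.2 = a → p = (a, i) ∨ p = (i, a) := by
    rintro ⟨x, y⟩ hp (rfl | rfl)
    · exact Or.inl (by rw [hleaf y (hadj.2 ⟨(hF.1 _ hp).ne, Or.inl hp⟩)])
    · exact Or.inr (by rw [hleaf x (hadj.2 ⟨(hF.1 _ hp).ne', Or.inr hp⟩)])
  obtain ⟨hia, he⟩ := hadj.1 hai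
  obtain ⟨e, he, hea⟩ : ∃ e ∈ F, e = (a, i) ∨ e = (i, a) := by
    rcases he with he | he
    exacts [⟨_, he, Or.inl rfl⟩, ⟨_, he, Or.inr rfl⟩]
  refine ⟨a, i, e, he, hia.symm, hea, fun p hp => ?_⟩
  obtain ⟨hpe, hpF⟩ := Finset.mem_erase.1 hp
  by_contra hpa
  rcases hat p hpF (by tauto) with rfl | rfl <;> rcases hea with rfl | rfl <;>
    first | exact hpe rfl | exact hasymm hpF he

end ForestRep

namespace Gr

variable {n : ℕ} {S T : Set (Fin n)}

def gen (m : Fin n × Bool) : Gr n := ι ℝ (Pi.single m 1)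

def der (m : Fin n × Bool) : Module.End ℝ (Gr n) :=
  CliffordAlgebra.contractLeft (Q := (0 : QuadraticForm ℝ (GrM n))) (LinearMap.proj m)

def gω (i : Fin n) : Gr n := gξ i * gη i

theorem gξ_eq_gen (i : Fin n) : gξ i = gen (i, false) := rfl

theorem gη_eq_gen (i : Fin n) : gη i = gen (i, true) := rfl

theorem gen_mul_self (m : Fin n × Bool) : gen m * gen m = 0 := ι_sq_zero _

theorem gen_mul_gen_comm (x y : Fin n × Bool) : gen x * gen y = -(gen y * gen x) :=
  eq_neg_of_add_eq_zero_left (ι_add_mul_swap _ _)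

theorem der_gen_mul_of_ne {m m' : Fin n × Bool} (h : m ≠ m') (w : Gr n) :
    der m (gen m' * w) = -(gen m' * der m w) := by
  rw [der, gen, CliffordAlgebra.contractLeft_ι_mul, LinearMap.proj_apply, Pi.single_eq_of_ne h,
    zero_smul, zero_sub]

def pairSubalg (S : Set (Fin n)) : Subalgebra ℝ (Gr n) :=
  Algebra.adjoin ℝ {x | ∃ a c : Fin n × Bool, a.1 ∈ S ∧ c.1 ∈ S ∧ x = gen a * gen c}

theorem gen_mul_gen_mem {a c : Fin n × Bool} (ha : a.1 ∈ S) (hc : c.1 ∈ S) :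
    gen a * gen c ∈ pairSubalg S :=
  Algebra.subset_adjoin ⟨a, c, ha, hc, rfl⟩

theorem pairSubalg_mono (h : S ⊆ T) : pairSubalg S ≤ pairSubalg T :=
  Algebra.adjoin_mono (by rintro x ⟨a, c, ha, hc, rfl⟩; exact ⟨a, c, h ha, h hc, rfl⟩)

theorem commute_gen_of_mem (m : Fin n × Bool) {x : Gr n} (hx : x ∈ pairSubalg S) :
    Commute (gen m) x := by
  induction hx using Algebra.adjoin_induction with
  | mem x hx =>
    obtain ⟨a, c, -, -, rfl⟩ := hx
    rw [Commute, SemiconjBy, ← mul_assoc, gen_mul_gen_comm m a, neg_mul, mul_assoc,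
      gen_mul_gen_comm m c, mul_neg, neg_neg, ← mul_assoc]
  | algebraMap r => exact Algebra.commute_algebraMap_right r _
  | add x y _ _ hx hy => exact hx.add_right hy
  | mul x y _ _ hx hy => exact hx.mul_right hy

theorem commute_of_mem {x y : Gr n} (hx : x ∈ pairSubalg S) (hy : y ∈ pairSubalg T) :
    Commute x y := by
  induction hy using Algebra.adjoin_induction with
  | mem y hy =>
    obtain ⟨a, c, -, -, rfl⟩ := hy
    exact ((commute_gen_of_mem a hx).mul_left (commute_gen_of_mem c hx)).symm
  | algebraMap r => exact Algebra.commute_algebraMap_right r _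
  | add y z _ _ hy hz => exact hy.add_right hz
  | mul y z _ _ hy hz => exact hy.mul_right hz

theorem der_mul_of_mem {m : Fin n × Bool} (hm : m.1 ∉ S) {x : Gr n} (hx : x ∈ pairSubalg S)
    (y : Gr n) : der m (x * y) = x * der m y := by
  induction hx using Algebra.adjoin_induction generalizing y with
  | mem x hx =>
    obtain ⟨a, c, ha, hc, rfl⟩ := hx
    have hma : m ≠ a := by rintro rfl; exact hm ha
    have hmc : m ≠ c := by rintro rfl; exact hm hc
    rw [mul_assoc, der_gen_mul_of_ne hma, der_gen_mul_of_ne hmc, mul_neg, neg_neg, mul_assoc]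
  | algebraMap r => exact CliffordAlgebra.contractLeft_algebraMap_mul _ r y
  | add x z _ _ hx hz => rw [add_mul, map_add, hx, hz, add_mul]
  | mul x z _ _ hx hz => rw [mul_assoc, hx, hz, mul_assoc]

theorem pairD_apply (a : Fin n) (x : Gr n) : pairD a x = der (a, true) (der (a, false) x) := rfl

theorem der_der_comm (m m' : Fin n × Bool) (x : Gr n) : der m (der m' x) = -(der m' (der m x)) :=
  CliffordAlgebra.contractLeft_comm _ _ x

theorem pairD_commute (i j : Fin n) : Commute (pairD (n := n) i) (pairD j) := by
  refine LinearMap.ext fun x => ?_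
  simp only [Module.End.mul_apply, pairD_apply, der_der_comm (i, false) (j, true),
    der_der_comm (i, true) (j, true), der_der_comm (i, false) (j, false),
    der_der_comm (i, true) (j, false), map_neg, neg_neg]

theorem pairD_mul_of_mem {a : Fin n} (ha : a ∉ S) {y : Gr n} (hy : y ∈ pairSubalg S)
    (x : Gr n) : pairD a (y * x) = y * pairD a x := by
  rw [pairD_apply, pairD_apply, der_mul_of_mem ha hy, der_mul_of_mem ha hy]

theorem gω_mem {i : Fin n} (hi : i ∈ S) : gω i ∈ pairSubalg S :=
  gen_mul_gen_mem (a := (i, false)) (c := (i, true)) hi hi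

theorem one_add_gω_mem {i : Fin n} (hi : i ∈ S) : 1 + gω i ∈ pairSubalg S :=
  add_mem (one_mem _) (gω_mem hi)

theorem udot_add_one_eq (i j : Fin n) :
    udot i j + 1 = gω i + gω j - gω i * gω j - gξ i * gη j - gξ j * gη i := by
  simp only [udot, gz, gω]
  noncomm_ring

theorem udot_add_one_mem {i j : Fin n} (hi : i ∈ S) (hj : j ∈ S) : udot i j + 1 ∈ pairSubalg S := by
  rw [udot_add_one_eq]
  exact sub_mem (sub_mem (sub_mem (add_mem (gω_mem hi) (gω_mem hj))
    (mul_mem (gω_mem hi) (gω_mem hj))) (gen_mul_gen_mem (a := (i, false)) (c := (j, true)) hi hj))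
    (gen_mul_gen_mem (a := (j, false)) (c := (i, true)) hj hi)

theorem udot_comm (i j : Fin n) : udot i j = udot j i := by
  have h := (commute_of_mem (gω_mem (Set.mem_univ i)) (gω_mem (Set.mem_univ j))).eq
  rw [← add_left_inj 1, udot_add_one_eq, udot_add_one_eq, h]
  abel

theorem gω_mul_gen (a : Fin n) (b : Bool) : gω a * gen (a, b) = 0 := by
  rw [gω, gξ_eq_gen, gη_eq_gen, mul_assoc]
  cases b
  · rw [gen_mul_gen_comm (a, true), mul_neg, ← mul_assoc, gen_mul_self, zero_mul, neg_zero]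
  · rw [gen_mul_self, mul_zero]

theorem one_add_gω_mul_udot_add_one (a i : Fin n) :
    (1 + gω a) * (udot i a + 1) = gω a + gω i - gξ i * gη a - gξ a * gη i := by
  have h1 : gω a * gω a = 0 := by
    rw [show gω a * gω a = gω a * gen (a, false) * gen (a, true) from (mul_assoc _ _ _).symm,
      gω_mul_gen, zero_mul]
  have h2 : gω i * gω a * gω a = 0 := by rw [mul_assoc, h1, mul_zero]
  have h3 : gω a * gξ i * gη a = 0 := by
    rw [gξ_eq_gen, gη_eq_gen, ← (commute_gen_of_mem (i, false) (gω_mem (Set.mem_univ a))).eq,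
      mul_assoc, gω_mul_gen, mul_zero]
  have h4 : gω a * gξ a * gη i = 0 := by rw [gξ_eq_gen, gω_mul_gen, zero_mul]
  have h5 : gω a * gω i = gω i * gω a :=
    (commute_of_mem (gω_mem (Set.mem_univ a)) (gω_mem (S := Set.univ) (Set.mem_univ i))).eq
  rw [udot_add_one_eq]
  simp only [add_mul, mul_add, mul_sub, one_mul, ← mul_assoc, h5, h1, h2, h3, h4]
  abel

theorem pairD_one_add_gω (a : Fin n) : pairD a (1 + gω a) = 1 := by
  simp [pairD_apply, der, gω, gξ, gη, CliffordAlgebra.contractLeft_ι_mul]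

theorem pairD_one_add_gω_mul_udot_add_one {a i : Fin n} (h : i ≠ a) :
    pairD a ((1 + gω a) * (udot i a + 1)) = 1 := by
  rw [one_add_gω_mul_udot_add_one]
  simp [pairD_apply, der, gω, gξ, gη, CliffordAlgebra.contractLeft_ι_mul, h]

def density : Gr n := (List.ofFn fun i : Fin n => 1 + gω i).prod

def edgeProd (F : Finset (Fin n × Fin n)) : Gr n := (F.toList.map fun p => udot p.1 p.2 + 1).prod

theorem pairD_mul_eq_of_pairD_eq_one {a : Fin n} (ha : a ∉ S) {x y : Gr n}
    (hx : x ∈ pairSubalg T) (hy : y ∈ pairSubalg S) (h : pairD a x = 1) : pairD a (x * y) = y := by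
  rw [(commute_of_mem hx hy).eq, pairD_mul_of_mem ha hy, h, mul_one]

theorem fullD_eq_of_pairD_eq (a : Fin n) {x y : Gr n} (h : pairD a x = pairD a y) :
    fullD x = fullD y := by
  have hperm := List.perm_cons_erase (List.mem_finRange a)
  have hfull : fullD = pairD a * (((List.finRange n).erase a).map pairD).prod := by
    rw [fullD, List.ofFn_eq_map, hperm.prod_map_eq_mul fun i _ j _ => pairD_commute i j]
  rw [hfull, (Commute.list_prod_right _ _ ?_).eq, Module.End.mul_apply, Module.End.mul_apply, h]
  simp only [List.mem_map]
  rintro _ ⟨j, -, rfl⟩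
  exact pairD_commute a j

theorem prod_map_one_add_gω_mem {l : List (Fin n)} (hl : ∀ i ∈ l, i ∈ S) :
    (l.map fun i => 1 + gω i).prod ∈ pairSubalg S := by
  refine Subalgebra.list_prod_mem _ ?_
  simp only [List.mem_map]
  rintro _ ⟨i, hi, rfl⟩
  exact one_add_gω_mem (hl i hi)

theorem exists_density_eq (a : Fin n) :
    ∃ Z ∈ pairSubalg ({a}ᶜ : Set (Fin n)), density = (1 + gω a) * Z := by
  refine ⟨(((List.finRange n).erase a).map fun i => 1 + gω i).prod,
    prod_map_one_add_gω_mem fun i hi => ?_, ?_⟩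
  · exact ((List.nodup_finRange n).mem_erase_iff.1 hi).1
  · rw [density, List.ofFn_eq_map, (List.perm_cons_erase (List.mem_finRange a)).prod_map_eq_mul]
    exact fun i _ j _ => commute_of_mem (one_add_gω_mem (Set.mem_univ i))
      (one_add_gω_mem (Set.mem_univ j))

theorem edgeProd_mem {F : Finset (Fin n × Fin n)} (hF : ∀ p ∈ F, p.1 ∈ S ∧ p.2 ∈ S) :
    edgeProd F ∈ pairSubalg S := by
  refine Subalgebra.list_prod_mem _ ?_
  simp only [List.mem_map, Finset.mem_toList]
  rintro _ ⟨p, hp, rfl⟩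
  exact udot_add_one_mem (hF p hp).1 (hF p hp).2

theorem edgeProd_eq_mul_erase {F : Finset (Fin n × Fin n)} {e : Fin n × Fin n} (he : e ∈ F) :
    edgeProd F = (udot e.1 e.2 + 1) * edgeProd (F.erase e) := by
  have hperm : F.toList.Perm (e :: (F.erase e).toList) := by
    simpa only [Finset.insert_erase he] using Finset.toList_insert (Finset.notMem_erase e F)
  rw [edgeProd, hperm.prod_map_eq_mul, edgeProd]
  exact fun p _ q _ => commute_of_mem (udot_add_one_mem (Set.mem_univ p.1) (Set.mem_univ p.2))
    (udot_add_one_mem (Set.mem_univ q.1) (Set.mem_univ q.2))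

theorem prod_map_pairD_apply {l : List (Fin n)} (hl : l.Nodup) {y : Gr n}
    (hy : y ∈ pairSubalg {i | i ∉ l}) :
    (l.map pairD).prod ((l.map fun i => 1 + gω i).prod * y) = y := by
  induction l generalizing y with
  | nil => simp
  | cons a l ih =>
    obtain ⟨hal, hl⟩ := List.nodup_cons.1 hl
    have hsub : {i | i ∉ a :: l} ⊆ {i | i ∉ l} := fun i hi => by simp_all
    have hQy : (l.map fun i => 1 + gω i).prod * y ∈ pairSubalg ({a}ᶜ : Set (Fin n)) :=
      mul_mem (prod_map_one_add_gω_mem fun i hi h => hal (h ▸ hi))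
        (pairSubalg_mono (fun i hi => by simp_all) hy)
    rw [List.map_cons, List.prod_cons, (Commute.list_prod_right _ _ ?_).eq, Module.End.mul_apply,
      List.map_cons, List.prod_cons, mul_assoc,
      pairD_mul_eq_of_pairD_eq_one (by simp) (one_add_gω_mem (Set.mem_univ a)) hQy
        (pairD_one_add_gω a), ih hl (pairSubalg_mono hsub hy)]
    simp only [List.mem_map]
    rintro _ ⟨j, -, rfl⟩
    exact pairD_commute a j

theorem fullD_density : fullD (density : Gr n) = 1 := by
  have h := prod_map_pairD_apply (List.nodup_finRange n) (one_mem (pairSubalg _))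
  rwa [mul_one, ← List.ofFn_eq_map, ← List.ofFn_eq_map] at h

theorem fullD_density_mul_edgeProd {F : Finset (Fin n × Fin n)} (hF : ForestRep F) :
    fullD (density * edgeProd F) = 1 := by
  induction F using Finset.strongInduction with
  | H F ih =>
  rcases F.eq_empty_or_nonempty with rfl | hne
  · simpa [edgeProd] using fullD_density
  obtain ⟨a, i, e, he, hia, hea, hleaf⟩ := hF.exists_leaf hne
  rw [← ih _ (Finset.erase_ssubset he) (hF.mono (Finset.erase_subset e F))]
  obtain ⟨Z, hZ, hdensity⟩ := exists_density_eq a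
  have hP : edgeProd (F.erase e) ∈ pairSubalg ({a}ᶜ : Set (Fin n)) := edgeProd_mem hleaf
  have hudot : udot e.1 e.2 = udot i a := by rcases hea with rfl | rfl <;> simp [udot_comm]
  have hcomm : Commute Z (udot i a + 1) :=
    commute_of_mem hZ (udot_add_one_mem (Set.mem_univ i) (Set.mem_univ a))
  have ha : a ∉ ({a}ᶜ : Set (Fin n)) := by simp
  refine fullD_eq_of_pairD_eq a ?_
  calc pairD a (density * edgeProd F)
      = pairD a ((1 + gω a) * (udot i a + 1) * (Z * edgeProd (F.erase e))) := by
        rw [edgeProd_eq_mul_erase he, hudot, hdensity, mul_assoc, hcomm.left_comm, ← mul_assoc,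
          ← mul_assoc]
    _ = Z * edgeProd (F.erase e) :=
        pairD_mul_eq_of_pairD_eq_one ha (mul_mem (one_add_gω_mem (Set.mem_univ a))
          (udot_add_one_mem (Set.mem_univ i) (Set.mem_univ a))) (mul_mem hZ hP)
          (pairD_one_add_gω_mul_udot_add_one hia)
    _ = pairD a ((1 + gω a) * (Z * edgeProd (F.erase e))) :=
        (pairD_mul_eq_of_pairD_eq_one ha (one_add_gω_mem (Set.mem_univ a)) (mul_mem hZ hP)
          (pairD_one_add_gω a)).symm
    _ = pairD a (density * edgeProd (F.erase e)) := by rw [hdensity, mul_assoc]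

end Gr

/-- For any forest `F` on the finite vertex set `Fin n`, the hyperbolic
fermionic integral of `∏_{ij ∈ F} (uᵢ·uⱼ + 1)` equals `1`. -/
theorem forest_integral_eq_one (n : ℕ) (F : Finset (Fin n × Fin n)) (hF : ForestRep F) :
    sint ((F.toList.map (fun p => udot p.1 p.2 + 1)).prod) = 1 := by
  change algebraMapInv (fullD (Gr.density * Gr.edgeProd F)) = 1
  rw [Gr.fullD_density_mul_edgeProd hF, map_one]
end
end

section
/- Augmented-graph identity for forests with vertex weights: Σ_{F forest of G} ∏_{ij∈F} β_{ij} ∏_{T∈F}(1+Σ_{i∈T} h_i) equals Σ_{F' forest of G̃} ∏_{ij∈F'} β̃_{ij}, where G̃ is G with one extra vertex δ joined to each i∈V(G) with weight β̃_{iδ} = h_i and β̃_{ij}=β_{ij} on G. -/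
open scoped Classical

/-- Edge weights on the augmented graph `G̃`: the extra vertex `δ = Fin.last n` is
joined to each `i` with weight `h i`; all other weights are those of `β`. -/
def βaug {n : ℕ} (β : Fin n → Fin n → ℝ) (h : Fin n → ℝ) :
    Fin (n + 1) → Fin (n + 1) → ℝ := fun i j =>
  if hi : i = Fin.last n then
    (if hj : j = Fin.last n then 0 else h (j.castPred hj))
  else if hj : j = Fin.last n then h (i.castPred hi)
  else β (i.castPred hi) (j.castPred hj)

/-!
Joining the new vertex `δ` to the vertices of `R` keeps a forest `F` of `G` acyclic exactly when
`R` meets each tree of `F` at most once: adding the edges `rδ` one at a time, an edge closes a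
cycle iff `δ` is already reachable from `r`, i.e. iff the tree of `r` already contains a point of
`R`. Every forest of `G̃` arises in this way from a unique pair `(F, R)`, with weight
`∏_{ij∈F} βᵢⱼ ∏_{r∈R} hᵣ`; for fixed `F`, summing over the admissible `R` (at most one point
in each tree, chosen independently) is the expansion of `∏_T (1 + ∑_{i∈T} hᵢ)`.
-/

namespace Finset

variable {α M R : Type*}

theorem sum_powerset_union_of_disjoint [DecidableEq α] [AddCommMonoid M] {s t : Finset α}
    (hst : Disjoint s t) (φ : Finset α → M) :
    ∑ S ∈ (s ∪ t).powerset, φ S = ∑ S ∈ s.powerset, ∑ T ∈ t.powerset, φ (S ∪ T) := by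
  induction s using Finset.induction generalizing φ with
  | empty => simp
  | @insert a s ha ih =>
    rw [disjoint_insert_left] at hst
    rw [insert_union, sum_powerset_insert (by simp [ha, hst.1]), sum_powerset_insert ha,
      ih hst.2, ih hst.2]
    simp only [insert_union]

theorem sum_powerset_ite_card_le_one [CommSemiring R] (s : Finset α) (g : α → R) :
    ∑ S ∈ s.powerset, (if #S ≤ 1 then ∏ i ∈ S, g i else 0) = 1 + ∑ i ∈ s, g i := by
  induction s using Finset.induction with
  | empty => simp
  | @insert a s ha ih =>
    have hsingle : ∑ S ∈ s.powerset, (if #(insert a S) ≤ 1 then ∏ i ∈ insert a S, g i else 0)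
        = g a := by
      rw [sum_eq_single ∅ (fun S hS hne => ?_) (by simp)]
      · simp
      · have haS : a ∉ S := fun haS => ha (mem_powerset.mp hS haS)
        have hSpos : 0 < #S := card_pos.mpr (nonempty_iff_ne_empty.mpr hne)
        rw [if_neg (by rw [card_insert_of_notMem haS]; omega)]
    rw [sum_powerset_insert ha, ih, hsingle, sum_insert ha]
    ring

theorem prod_one_add_sum_fiber_eq_sum_injOn [Fintype α] [DecidableEq α] [CommSemiring R] {γ : Type*}
    [DecidableEq γ] (f : α → γ) (g : α → R) (t : Finset γ) :
    ∏ c ∈ t, (1 + ∑ i with f i = c, g i)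
      = ∑ S ∈ ({i | f i ∈ t} : Finset α).powerset, if Set.InjOn f S then ∏ i ∈ S, g i else 0 := by
  induction t using Finset.induction with
  | empty => simp
  | @insert c t hc ih =>
    have hdisj : Disjoint ({i | f i = c} : Finset α) ({i | f i ∈ t} : Finset α) :=
      disjoint_filter.mpr fun i _ (hi : f i = c) => hi ▸ hc
    rw [prod_insert hc, ih]
    simp only [mem_insert, filter_or]
    rw [sum_powerset_union_of_disjoint hdisj,
      ← sum_powerset_ite_card_le_one, sum_mul_sum]
    refine sum_congr rfl fun S hS => sum_congr rfl fun T hT => ?_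
    rw [mem_powerset, subset_iff] at hS hT
    simp only [mem_filter, mem_univ, true_and] at hS hT
    have hST : Disjoint S T := disjoint_left.mpr fun i hiS hiT => hc (hS hiS ▸ hT hiT)
    have hinj : Set.InjOn f ↑(S ∪ T) ↔ #S ≤ 1 ∧ Set.InjOn f T := by
      rw [coe_union, Set.injOn_union (disjoint_coe.mpr hST), card_le_one]
      simp only [Set.InjOn, mem_coe]
      grind
    rw [ite_zero_mul_ite_zero, prod_union hST]
    exact if_congr hinj.symm rfl rfl

end Finset

namespace SimpleGraph

variable {V W : Type*} {G : SimpleGraph V}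

theorem isAcyclic_map_iff (f : V ↪ W) : (G.map f).IsAcyclic ↔ G.IsAcyclic := by
  refine ⟨IsAcyclic.of_map f, fun hG w c hc => ?_⟩
  have hrange : ∀ x ∈ c.support, x ∈ Set.range f := by
    intro x hx
    obtain ⟨e, he, hxe⟩ := (Walk.mem_support_iff_exists_mem_edges_of_not_nil hc.not_nil).mp hx
    induction e using Sym2.ind with | _ a b =>
    obtain ⟨a', b', -, rfl, rfl⟩ := (map_adj f G a b).mp (c.adj_of_mem_edges he)
    rcases Sym2.mem_iff.mp hxe with rfl | rfl <;> exact ⟨_, rfl⟩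
  have hinduce : ((G.map f).induce (Set.range f)).IsAcyclic :=
    (Embedding.map f G).isoInduceRange.isAcyclic_iff.mp hG
  refine hinduce (c.induce _ hrange) <|
    (Walk.isCycle_map_iff_of_injective (f := (Embedding.induce _).toHom)
      (Embedding.induce (G := G.map f) (Set.range f)).injective).mp ?_
  rwa [Walk.map_induce]

end SimpleGraph

open Finset SimpleGraph Fin

abbrev edgeGraph {V : Type*} (F : Finset (V × V)) : SimpleGraph V :=
  SimpleGraph.fromRel fun i j => (i, j) ∈ F

section Augment

variable {n : ℕ} (F : Finset (Fin n × Fin n)) (R : Finset (Fin n))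

def augment : Finset (Fin (n + 1) × Fin (n + 1)) :=
  F.image (Prod.map castSucc castSucc) ∪ R.image fun r => (r.castSucc, last n)

variable {F R}

@[simp]
theorem castSucc_castSucc_mem_augment {i j : Fin n} :
    (i.castSucc, j.castSucc) ∈ augment F R ↔ (i, j) ∈ F := by
  simp [augment, (castSucc_ne_last _).symm]

@[simp]
theorem castSucc_last_mem_augment {i : Fin n} : (i.castSucc, last n) ∈ augment F R ↔ i ∈ R := by
  simp [augment]

@[simp]
theorem last_left_notMem_augment (x : Fin (n + 1)) : (last n, x) ∉ augment F R := by
  simp [augment]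

theorem edgeGraph_augment_empty :
    edgeGraph (augment F ∅) = (edgeGraph F).map castSuccEmb := by
  ext u v
  rcases eq_castSucc_or_eq_last u with ⟨i, rfl⟩ | rfl <;>
    rcases eq_castSucc_or_eq_last v with ⟨j, rfl⟩ | rfl <;>
    simp only [map_adj] <;> simp [castSucc_ne_last, (castSucc_ne_last _).symm]

theorem edgeGraph_augment_insert (r : Fin n) :
    edgeGraph (augment F (insert r R)) = edgeGraph (augment F R) ⊔ edge r.castSucc (last n) := by
  ext u v
  rcases eq_castSucc_or_eq_last u with ⟨i, rfl⟩ | rfl <;>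
    rcases eq_castSucc_or_eq_last v with ⟨j, rfl⟩ | rfl <;>
    simp [edge_adj, castSucc_ne_last, (castSucc_ne_last _).symm, eq_comm, or_comm]

theorem edgeGraph_augment_adj_castSucc {i j : Fin n} :
    (edgeGraph (augment F R)).Adj i.castSucc j.castSucc ↔ (edgeGraph F).Adj i j := by
  simp

theorem edgeGraph_augment_adj_last {i : Fin n} :
    (edgeGraph (augment F R)).Adj i.castSucc (last n) ↔ i ∈ R := by
  simp [castSucc_ne_last]

theorem edgeGraph_augment_reachable_last_iff (i : Fin n) :
    (edgeGraph (augment F R)).Reachable i.castSucc (last n) ↔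
      ∃ r ∈ R, (edgeGraph F).Reachable i r := by
  refine ⟨fun ⟨p⟩ => ?_, fun ⟨r, hr, hir⟩ => ?_⟩
  · by_contra hi
    -- `S` contains `δ` and is closed under adjacency, so no walk from `δ` can leave it
    let S : Set (Fin (n + 1)) :=
      {x | ∀ j : Fin n, x = j.castSucc → ∃ r ∈ R, (edgeGraph F).Reachable j r}
    obtain ⟨d, -, hdS, hdS'⟩ := p.reverse.exists_boundary_dart S
      (fun j hj => absurd hj.symm (castSucc_ne_last j)) (fun h => hi (h i rfl))
    obtain ⟨⟨x, y⟩, hxy⟩ := d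
    simp only [S, Set.mem_ofPred_eq, not_forall] at hdS hdS'
    obtain ⟨j, rfl, hj⟩ := hdS'
    refine hj ?_
    rcases eq_castSucc_or_eq_last x with ⟨k, rfl⟩ | rfl
    · obtain ⟨r, hr, hkr⟩ := hdS k rfl
      exact ⟨r, hr, (edgeGraph_augment_adj_castSucc.mp hxy).reachable.symm.trans hkr⟩
    · exact ⟨j, edgeGraph_augment_adj_last.mp hxy.symm, .rfl⟩
  · let castSuccHom : edgeGraph F →g edgeGraph (augment F R) :=
      ⟨castSucc, edgeGraph_augment_adj_castSucc.mpr⟩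
    exact (hir.map castSuccHom).trans (edgeGraph_augment_adj_last.mpr hr).reachable

theorem isAcyclic_edgeGraph_augment_iff :
    (edgeGraph (augment F R)).IsAcyclic ↔
      (edgeGraph F).IsAcyclic ∧ Set.InjOn (edgeGraph F).connectedComponentMk R := by
  induction R using Finset.induction with
  | empty => rw [edgeGraph_augment_empty, isAcyclic_map_iff]; simp
  | @insert r R hr ih =>
    rw [edgeGraph_augment_insert, isAcyclic_sup_fromEdgeSet_iff, ih,
      edgeGraph_augment_reachable_last_iff, coe_insert, Set.injOn_insert (by simpa)]
    simp [hr, castSucc_ne_last, ConnectedComponent.eq, reachable_comm, and_assoc]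

theorem forestRep_augment_iff :
    ForestRep (augment F R) ↔
      ForestRep F ∧ Set.InjOn (edgeGraph F).connectedComponentMk R := by
  have hlt : (∀ p ∈ augment F R, p.1 < p.2) ↔ ∀ p ∈ F, p.1 < p.2 := by
    simp only [augment, forall_mem_union, forall_mem_image, Prod.map_fst, Prod.map_snd,
      castSucc_lt_castSucc_iff, castSucc_lt_last, implies_true, and_true]
  rw [ForestRep, ForestRep, isAcyclic_edgeGraph_augment_iff, hlt, and_assoc]

theorem fwt_augment (β : Fin n → Fin n → ℝ) (h : Fin n → ℝ) :
    fwt (βaug β h) (augment F R) = fwt β F * ∏ r ∈ R, h r := by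
  have hdisj : Disjoint (F.image (Prod.map castSucc castSucc))
      (R.image fun r => (r.castSucc, last n)) := by
    rw [Finset.disjoint_left]
    rintro _ hp hq
    obtain ⟨p, -, rfl⟩ := mem_image.mp hp
    obtain ⟨r, -, hr⟩ := mem_image.mp hq
    exact castSucc_ne_last _ (congrArg Prod.snd hr).symm
  rw [fwt, augment, prod_union hdisj, prod_image, prod_image]
  · simp [fwt, βaug, castSucc_ne_last]
  · exact fun r _ r' _ hrr' => castSucc_injective n (congrArg Prod.fst hrr')
  · exact ((castSucc_injective n).prodMap (castSucc_injective n)).injOn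

theorem augment_injective : Function.Injective (Function.uncurry (augment (n := n))) := by
  rintro ⟨F, R⟩ ⟨F', R'⟩ h
  simp only [Function.uncurry_apply_pair] at h
  refine Prod.ext (ext fun ⟨i, j⟩ => ?_) (ext fun i => ?_)
  · simpa using congrArg ((i.castSucc, j.castSucc) ∈ ·) h
  · simpa using congrArg ((i.castSucc, last n) ∈ ·) h

theorem exists_augment_eq {F' : Finset (Fin (n + 1) × Fin (n + 1))}
    (hF' : ∀ p ∈ F', p.1 < p.2) : ∃ F R, augment F R = F' := by
  refine ⟨univ.filter fun q => (q.1.castSucc, q.2.castSucc) ∈ F',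
    univ.filter fun r => (r.castSucc, last n) ∈ F', ?_⟩
  ext ⟨x, y⟩
  rcases eq_castSucc_or_eq_last x with ⟨i, rfl⟩ | rfl
  · rcases eq_castSucc_or_eq_last y with ⟨j, rfl⟩ | rfl <;> simp
  · simpa using fun h => (hF' _ h).not_ge (le_last y)

theorem sum_forestRep_eq_sum_augment {M : Type*} [AddCommMonoid M]
    (φ : Finset (Fin (n + 1) × Fin (n + 1)) → M) :
    ∑ F', (if ForestRep F' then φ F' else 0)
      = ∑ F, ∑ R, if ForestRep (augment F R) then φ (augment F R) else 0 := by
  rw [← Fintype.sum_prod_type', ← sum_filter, ← sum_filter]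
  refine (sum_nbij (Function.uncurry augment)
    (fun p hp => mem_filter.mpr ⟨mem_univ _, (mem_filter.mp hp).2⟩)
    augment_injective.injOn (fun F' hF' => ?_) (fun _ _ => rfl)).symm
  obtain ⟨F, R, rfl⟩ := exists_augment_eq (mem_filter.mp hF').2.1
  exact ⟨(F, R), mem_filter.mpr ⟨mem_univ _, (mem_filter.mp hF').2⟩, rfl⟩

theorem treeFactor_eq_sum (g : Fin n → ℝ) :
    treeFactor F g
      = ∑ R : Finset (Fin n),
          if Set.InjOn (edgeGraph F).connectedComponentMk R then ∏ i ∈ R, g i else 0 := by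
  rw [treeFactor, prod_one_add_sum_fiber_eq_sum_injOn (edgeGraph F).connectedComponentMk,
    filter_true_of_mem fun i _ => mem_image_of_mem _ (mem_univ i), powerset_univ]

end Augment

theorem augmented_graph_forest_identity_general (n : ℕ)
    (β : Fin n → Fin n → ℝ)
    (h : Fin n → ℝ) :
    (∑ F : Finset (Fin n × Fin n),
        if ForestRep F then fwt β F * treeFactor F h else 0)
    = ∑ F' : Finset (Fin (n + 1) × Fin (n + 1)),
        if ForestRep F' then fwt (βaug β h) F' else 0 := by
  rw [sum_forestRep_eq_sum_augment]
  refine sum_congr rfl fun F _ => ?_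
  simp only [forestRep_augment_iff, fwt_augment, treeFactor_eq_sum, mul_sum, ite_and]
  split_ifs <;> simp

/-- Augmented-graph identity for forests with vertex weights:
`∑_{F forest of G} ∏_{ij∈F} βᵢⱼ ∏_{T∈F} (1 + ∑_{i∈T} hᵢ)
  = ∑_{F' forest of G̃} ∏_{ij∈F'} β̃ᵢⱼ`. -/
theorem augmented_graph_forest_identity (n : ℕ)
    (β : Fin n → Fin n → ℝ) (hβ : ∀ i j, β i j = β j i) (hβnn : ∀ i j, 0 ≤ β i j)
    (h : Fin n → ℝ) (hh : ∀ i, 0 ≤ h i) :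
    (∑ F : Finset (Fin n × Fin n),
        if ForestRep F then fwt β F * treeFactor F h else 0)
    = ∑ F' : Finset (Fin (n + 1) × Fin (n + 1)),
        if ForestRep F' then fwt (βaug β h) F' else 0 :=
  augmented_graph_forest_identity_general n β h
end

section
/- Expected tree size via external field: for the arboreal gas with weights β and uniform external field h>0 on a finite graph, the generating identity ⟨z_i⟩_{β,h} = E_{β,h}[h|T_i|/(1+h|T_i|)] holds, where under P_{β,h} a forest F has probability proportional to ∏_{ij∈F}β_{ij}·∏_{T∈F}(1+h|T|) and T_i is the tree containing i. -/
open scoped Classical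

/-- Generalised partition function `Z_{β,h} = ∑_F ∏_{ij∈F} βᵢⱼ ∏_{T∈F} (1 + ∑_{j∈T} hⱼ)`. -/
noncomputable def Zgen {n : ℕ} (β : Fin n → Fin n → ℝ) (h : Fin n → ℝ) : ℝ :=
  ∑ F : Finset (Fin n × Fin n), if ForestRep F then fwt β F * treeFactor F h else 0

/-- Number of vertices of the tree of `F` containing `i`. -/
noncomputable def treeSize {n : ℕ} (F : Finset (Fin n × Fin n)) (i : Fin n) : ℕ :=
  (Finset.univ.filter
    (fun j => (SimpleGraph.fromRel (fun a b => (a, b) ∈ F)).Reachable i j)).card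

/-- Expected tree size via external field: for the arboreal gas with
weights `β` and uniform external field `h > 0`,
`⟨z_i⟩_{β,h} = Z_{β,h-1_i}/Z_{β,h} = E_{β,h}[h|T_i|/(1+h|T_i|)]`, where under
`P_{β,h}` a forest has probability proportional to `∏_{ij∈F} βᵢⱼ ∏_{T∈F} (1+h|T|)`
and `T_i` is the tree containing `i`. -/
theorem expected_tree_size_identity (n : ℕ)
    (β : Fin n → Fin n → ℝ) (hβ : ∀ i j, β i j = β j i) (hβnn : ∀ i j, 0 ≤ β i j)
    (h : ℝ) (hh : 0 < h) (i : Fin n) :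
    Zgen β (fun j => h - if j = i then 1 else 0) / Zgen β (fun _ => h)
    = (∑ F : Finset (Fin n × Fin n),
        if ForestRep F then
          fwt β F * treeFactor F (fun _ => h) *
            (h * (treeSize F i : ℝ) / (1 + h * (treeSize F i : ℝ)))
        else 0) / Zgen β (fun _ => h) := by
  congr 1
  unfold Zgen
  apply Finset.sum_congr rfl
  intro F _
  by_cases hF : ForestRep F
  · simp only [hF, if_true]
    set G := SimpleGraph.fromRel (fun a b => (a, b) ∈ F) with hG
    set c₀ := G.connectedComponentMk i with hc₀
    set s : ℕ := treeSize F i with hs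
    have hfilter : (Finset.univ.filter (fun j => G.connectedComponentMk j = c₀))
        = Finset.univ.filter (fun j => G.Reachable i j) := by
      apply Finset.filter_congr
      intro j _
      simp only [hc₀, SimpleGraph.ConnectedComponent.eq, eq_iff_iff]
      exact ⟨fun hr => hr.symm, fun hr => hr.symm⟩
    have hcard : (Finset.univ.filter (fun j => G.connectedComponentMk j = c₀)).card = s := by
      rw [hfilter]; rfl
    have hmem : c₀ ∈ Finset.univ.image G.connectedComponentMk :=
      Finset.mem_image_of_mem _ (Finset.mem_univ i)
    have himem : i ∈ Finset.univ.filter (fun j => G.connectedComponentMk j = c₀) := by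
      simp only [Finset.mem_filter, Finset.mem_univ, true_and]
      exact hc₀.symm
    -- split products
    have hsplit : ∀ g : Fin n → ℝ, treeFactor F g =
        (1 + ∑ j ∈ Finset.univ.filter (fun j => G.connectedComponentMk j = c₀), g j) *
        ∏ c ∈ (Finset.univ.image G.connectedComponentMk).erase c₀,
          (1 + ∑ j ∈ Finset.univ.filter (fun j => G.connectedComponentMk j = c), g j) := by
      intro g
      rw [treeFactor, ← Finset.mul_prod_erase _ _ hmem]
    have hrest : ∀ c ∈ (Finset.univ.image G.connectedComponentMk).erase c₀,
        (1 + ∑ j ∈ Finset.univ.filter (fun j => G.connectedComponentMk j = c),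
          ((fun j => h - if j = i then 1 else 0) j))
        = (1 + ∑ j ∈ Finset.univ.filter (fun j => G.connectedComponentMk j = c),
          ((fun _ => h) j)) := by
      intro c hc
      congr 1
      apply Finset.sum_congr rfl
      intro j hj
      have hji : j ≠ i := by
        rintro rfl
        simp only [Finset.mem_filter] at hj
        exact (Finset.mem_erase.mp hc).1 (hj.2 ▸ rfl)
      simp [hji]
    have hsum0 : (∑ j ∈ Finset.univ.filter (fun j => G.connectedComponentMk j = c₀),
        (h - if j = i then 1 else 0)) = h * s - 1 := by
      rw [Finset.sum_sub_distrib, Finset.sum_const, hcard,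
        Finset.sum_ite_eq' _ i (fun _ => (1 : ℝ)), if_pos himem]
      ring
    have hsumh : (∑ _j ∈ Finset.univ.filter (fun j => G.connectedComponentMk j = c₀),
        h) = h * s := by
      rw [Finset.sum_const, hcard]; ring
    have hpos : (0 : ℝ) < 1 + h * s := by positivity
    rw [hsplit, hsplit, Finset.prod_congr rfl hrest, hsum0, hsumh]
    field_simp
    ring
  · simp [hF]
end
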